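/- arXiv:1312.7090 — 4 statements merged into one kernel-verified Lean document; each statement's English description precedes it below -/
import Mathlib

section
/- Let {X(λ)} be a *-resolution of the identity with sup‖X(λ)‖ = 1, and set F(λ) = X(λ)*X(λ). Then F(λ) ≤ F(μ) in the order of self-adjoint operators whenever λ < μ. -/
open Filter Topology
open scoped InnerProductSpace

/-! Since `X λ = X λ ∘ X μ` and `‖X λ‖ ≤ 1`, we get `‖X λ ξ‖ ≤ ‖X μ ξ‖`, which is exactly
`⟪F λ ξ, ξ⟫ ≤ ⟪F μ ξ, ξ⟫`. -/

theorem Real.le_of_iSup_eq {ι : Sort*} {f : ι → ℝ} {c : ℝ} (hc : c ≠ 0) (h : ⨆ i, f i = c)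
    (i : ι) : f i ≤ c := by
  have hbdd : BddAbove (Set.range f) := by
    by_contra hunb
    exact hc (h ▸ Real.iSup_of_not_bddAbove hunb)
  exact h ▸ le_ciSup hbdd i

namespace ContinuousLinearMap

open scoped InnerProduct

variable {𝕜 E F : Type*} [RCLike 𝕜] [NormedAddCommGroup E] [InnerProductSpace 𝕜 E]
  [CompleteSpace E] [NormedAddCommGroup F] [InnerProductSpace 𝕜 F] [CompleteSpace F]

theorem isPositive_adjoint_comp_self_sub_of_norm_apply_le {A B : E →L[𝕜] F}
    (h : ∀ x, ‖A x‖ ≤ ‖B x‖) : (B† ∘L B - A† ∘L A).IsPositive := by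
  refine isPositive_def'.mpr ⟨(isPositive_adjoint_comp_self B).isSelfAdjoint.sub
    (isPositive_adjoint_comp_self A).isSelfAdjoint, fun x => ?_⟩
  have hsq : ‖A x‖ ^ 2 ≤ ‖B x‖ ^ 2 := pow_le_pow_left₀ (norm_nonneg _) (h x) 2
  rw [apply_norm_sq_eq_inner_adjoint_left, apply_norm_sq_eq_inner_adjoint_left] at hsq
  simpa only [reApplyInnerSelf_apply, sub_apply, inner_sub_left, map_sub, sub_nonneg] using hsq

end ContinuousLinearMap

theorem star_resolution_F_monotone_general
    {H : Type*} [NormedAddCommGroup H] [InnerProductSpace ℂ H] [CompleteSpace H]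
    (X : ℝ → H →L[ℂ] H)
    (hnorm : (⨆ l : ℝ, ‖X l‖) = 1)
    (hmul : ∀ l m : ℝ, l < m → (X l).comp (X m) = X l ∧ (X m).comp (X l) = X l)
    (F : ℝ → H →L[ℂ] H)
    (hF : ∀ l, F l = (ContinuousLinearMap.adjoint (X l)).comp (X l)) :
    ∀ l m : ℝ, l < m → (F m - F l).IsPositive := by
  intro l m hlm
  rw [hF, hF]
  refine ContinuousLinearMap.isPositive_adjoint_comp_self_sub_of_norm_apply_le fun x => ?_
  calc ‖X l x‖ = ‖X l (X m x)‖ := by rw [← ContinuousLinearMap.comp_apply, (hmul l m hlm).1]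
    _ ≤ ‖X m x‖ := by
      simpa using (X l).le_of_opNorm_le (Real.le_of_iSup_eq one_ne_zero hnorm l) (X m x)

/-- For a *-resolution of the identity with `sup‖X(λ)‖ = 1` and `F(λ) = X(λ)*X(λ)`,
`F(λ) ≤ F(μ)` (in the order of self-adjoint operators) whenever `λ < μ`. -/
theorem star_resolution_F_monotone
    {H : Type*} [NormedAddCommGroup H] [InnerProductSpace ℂ H] [CompleteSpace H]
    (X : ℝ → H →L[ℂ] H)
    (hnorm : (⨆ l : ℝ, ‖X l‖) = 1)
    (hmul : ∀ l m : ℝ, l < m → (X l).comp (X m) = X l ∧ (X m).comp (X l) = X l)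
    (hbot : ∀ ξ : H, Tendsto (fun l => X l ξ) atBot (𝓝 0))
    (htop : ∀ ξ : H, Tendsto (fun l => X l ξ) atTop (𝓝 ξ))
    (hrc : ∀ (l : ℝ) (ξ : H), Tendsto (fun m => X m ξ) (𝓝[>] l) (𝓝 (X l ξ)))
    (hbotS : ∀ ξ : H, Tendsto (fun l => ContinuousLinearMap.adjoint (X l) ξ) atBot (𝓝 0))
    (htopS : ∀ ξ : H, Tendsto (fun l => ContinuousLinearMap.adjoint (X l) ξ) atTop (𝓝 ξ))
    (hrcS : ∀ (l : ℝ) (ξ : H), Tendsto (fun m => ContinuousLinearMap.adjoint (X m) ξ)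
      (𝓝[>] l) (𝓝 (ContinuousLinearMap.adjoint (X l) ξ)))
    (F : ℝ → H →L[ℂ] H)
    (hF : ∀ l, F l = (ContinuousLinearMap.adjoint (X l)).comp (X l)) :
    ∀ l m : ℝ, l < m → (F m - F l).IsPositive :=
  star_resolution_F_monotone_general X hnorm hmul F hF
end

section
/- Let {X(λ)} be a *-resolution of the identity with sup‖X(λ)‖ = 1, F(λ) = X(λ)*X(λ). Then sup_λ ‖F(λ)‖ = 1, F(λ)ξ → 0 strongly as λ → −∞, F(λ)ξ → ξ strongly as λ → +∞, and F is strongly right-continuous; hence {F(λ)} is a generalized resolution of the identity in the sense of Naimark. -/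
open Filter Topology
open scoped InnerProductSpace

/-!
Everything follows from `F(λ) = X(λ)* X(λ)` and `‖X(λ)‖ ≤ 1`. The C*-identity gives
`‖F(λ)‖ = ‖X(λ)‖²`; for `λ < μ` the relation `X(λ) = X(λ) X(μ)` writes `F(λ)` as the conjugate
`X(μ)* F(λ) X(μ) ≤ X(μ)* X(μ) = F(μ)`; and the strong limits of `F(λ)ξ = X(λ)*(X(λ)ξ)` are those
of `X(λ)` and `X(λ)*`, because the `X(λ)*` are uniformly bounded.
-/

lemma Real.le_of_iSup_eq_of_ne_zero {ι : Sort*} {f : ι → ℝ} {c : ℝ} (h : ⨆ i, f i = c)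
    (hc : c ≠ 0) (i : ι) : f i ≤ c := by
  have hbdd : BddAbove (Set.range f) := by
    by_contra hf
    -- an unbounded `⨆` in `ℝ` is the junk value `0`
    exact hc (h ▸ Real.iSup_of_not_bddAbove hf)
  exact h ▸ le_ciSup hbdd i

lemma CStarAlgebra.star_mul_self_le_of_mul_eq {A : Type*} [CStarAlgebra A] [PartialOrder A]
    [StarOrderedRing A] {a b : A} (ha : ‖a‖ ≤ 1) (hab : a * b = a) :
    star a * a ≤ star b * b := by
  have hle : star a * a ≤ 1 := by
    rw [← CStarAlgebra.norm_le_one_iff_of_nonneg _ (star_mul_self_nonneg a),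
      CStarRing.norm_star_mul_self]
    exact mul_le_one₀ ha (norm_nonneg a) ha
  calc star a * a = star b * (star a * a) * b := by
        conv_lhs => rw [← hab]
        simp only [star_mul, mul_assoc]
    _ ≤ star b * 1 * b := star_left_conjugate_le_conjugate hle b
    _ = star b * b := by rw [mul_one]

theorem Filter.Tendsto.clm_apply_of_norm_le {ι 𝕜 E F : Type*} [NontriviallyNormedField 𝕜]
    [SeminormedAddCommGroup E] [NormedSpace 𝕜 E] [SeminormedAddCommGroup F] [NormedSpace 𝕜 F]
    {l : Filter ι} {A : ι → E →L[𝕜] F} {b : ι → E} {y : E} {z : F} {C : ℝ}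
    (hb : Tendsto b l (𝓝 y)) (hA : ∀ᶠ i in l, ‖A i‖ ≤ C)
    (hAy : Tendsto (fun i => A i y) l (𝓝 z)) :
    Tendsto (fun i => A i (b i)) l (𝓝 z) := by
  have hsmall : Tendsto (fun i => A i (b i - y)) l (𝓝 0) := by
    have hbound : Tendsto (fun i => C * ‖b i - y‖) l (𝓝 0) := by
      simpa using ((hb.sub_const y).norm.const_mul C)
    refine squeeze_zero_norm' ?_ hbound
    filter_upwards [hA] with i hi
    exact (A i).le_of_opNorm_le hi _
  simpa using hsmall.add hAy

theorem star_resolution_F_generalized_resolution_general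
    {H : Type*} [NormedAddCommGroup H] [InnerProductSpace ℂ H] [CompleteSpace H]
    (X : ℝ → H →L[ℂ] H)
    (hnorm : (⨆ l : ℝ, ‖X l‖) = 1)
    (hmul : ∀ l m : ℝ, l < m → (X l).comp (X m) = X l ∧ (X m).comp (X l) = X l)
    (hbot : ∀ ξ : H, Tendsto (fun l => X l ξ) atBot (𝓝 0))
    (htop : ∀ ξ : H, Tendsto (fun l => X l ξ) atTop (𝓝 ξ))
    (hrc : ∀ (l : ℝ) (ξ : H), Tendsto (fun m => X m ξ) (𝓝[>] l) (𝓝 (X l ξ)))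
    (htopS : ∀ ξ : H, Tendsto (fun l => ContinuousLinearMap.adjoint (X l) ξ) atTop (𝓝 ξ))
    (hrcS : ∀ (l : ℝ) (ξ : H), Tendsto (fun m => ContinuousLinearMap.adjoint (X m) ξ)
      (𝓝[>] l) (𝓝 (ContinuousLinearMap.adjoint (X l) ξ)))
    (F : ℝ → H →L[ℂ] H)
    (hF : ∀ l, F l = (ContinuousLinearMap.adjoint (X l)).comp (X l)) :
    (∀ l, IsSelfAdjoint (F l)) ∧
    (⨆ l : ℝ, ‖F l‖) = 1 ∧
    (∀ l m : ℝ, l < m → (F m - F l).IsPositive) ∧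
    (∀ ξ : H, Tendsto (fun l => F l ξ) atBot (𝓝 0)) ∧
    (∀ ξ : H, Tendsto (fun l => F l ξ) atTop (𝓝 ξ)) ∧
    (∀ (l : ℝ) (ξ : H), Tendsto (fun m => F m ξ) (𝓝[>] l) (𝓝 (F l ξ))) := by
  have hX : ∀ l, ‖X l‖ ≤ 1 := Real.le_of_iSup_eq_of_ne_zero hnorm one_ne_zero
  have hXadj : ∀ l, ‖ContinuousLinearMap.adjoint (X l)‖ ≤ 1 := fun l => by
    rw [LinearIsometryEquiv.norm_map]; exact hX l
  have hFstar : ∀ l, F l = star (X l) * X l := hF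
  have hFapply : ∀ l ξ, F l ξ = ContinuousLinearMap.adjoint (X l) (X l ξ) := fun l ξ => by
    rw [hF]; rfl
  refine ⟨fun l => hFstar l ▸ .star_mul_self (X l), ?_, fun l m hlm => ?_,
    fun ξ => ?_, fun ξ => ?_, fun l ξ => ?_⟩
  · simp_rw [hFstar, CStarRing.norm_star_mul_self, ← sq]
    rw [← Real.iSup_pow (fun l => norm_nonneg (X l)), hnorm, one_pow]
  · rw [← ContinuousLinearMap.le_def, hFstar, hFstar]
    exact CStarAlgebra.star_mul_self_le_of_mul_eq (hX l) (hmul l m hlm).1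
  · simp_rw [hFapply]
    exact (hbot ξ).clm_apply_of_norm_le (.of_forall hXadj) (by simp)
  · simp_rw [hFapply]
    exact (htop ξ).clm_apply_of_norm_le (.of_forall hXadj) (htopS ξ)
  · simp_rw [hFapply]
    exact (hrc l ξ).clm_apply_of_norm_le (.of_forall hXadj) (hrcS l (X l ξ))

/-- For a *-resolution of the identity with `sup‖X(λ)‖ = 1`, the family
`F(λ) = X(λ)*X(λ)` is a generalized resolution of the identity in the sense of Naimark:
it consists of symmetric operators, `sup_λ ‖F(λ)‖ = 1`, it is monotone increasing,
strongly right-continuous, with strong limits `0` at `-∞` and `I` at `+∞`. -/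
theorem star_resolution_F_generalized_resolution
    {H : Type*} [NormedAddCommGroup H] [InnerProductSpace ℂ H] [CompleteSpace H]
    (X : ℝ → H →L[ℂ] H)
    (hnorm : (⨆ l : ℝ, ‖X l‖) = 1)
    (hmul : ∀ l m : ℝ, l < m → (X l).comp (X m) = X l ∧ (X m).comp (X l) = X l)
    (hbot : ∀ ξ : H, Tendsto (fun l => X l ξ) atBot (𝓝 0))
    (htop : ∀ ξ : H, Tendsto (fun l => X l ξ) atTop (𝓝 ξ))
    (hrc : ∀ (l : ℝ) (ξ : H), Tendsto (fun m => X m ξ) (𝓝[>] l) (𝓝 (X l ξ)))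
    (hbotS : ∀ ξ : H, Tendsto (fun l => ContinuousLinearMap.adjoint (X l) ξ) atBot (𝓝 0))
    (htopS : ∀ ξ : H, Tendsto (fun l => ContinuousLinearMap.adjoint (X l) ξ) atTop (𝓝 ξ))
    (hrcS : ∀ (l : ℝ) (ξ : H), Tendsto (fun m => ContinuousLinearMap.adjoint (X m) ξ)
      (𝓝[>] l) (𝓝 (ContinuousLinearMap.adjoint (X l) ξ)))
    (F : ℝ → H →L[ℂ] H)
    (hF : ∀ l, F l = (ContinuousLinearMap.adjoint (X l)).comp (X l)) :
    (∀ l, IsSelfAdjoint (F l)) ∧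
    (⨆ l : ℝ, ‖F l‖) = 1 ∧
    (∀ l m : ℝ, l < m → (F m - F l).IsPositive) ∧
    (∀ ξ : H, Tendsto (fun l => F l ξ) atBot (𝓝 0)) ∧
    (∀ ξ : H, Tendsto (fun l => F l ξ) atTop (𝓝 ξ)) ∧
    (∀ (l : ℝ) (ξ : H), Tendsto (fun m => F m ξ) (𝓝[>] l) (𝓝 (F l ξ))) :=
  star_resolution_F_generalized_resolution_general X hnorm hmul hbot htop hrc htopS hrcS F hF
end

section
/- Let {X(λ)} be a *-resolution of the identity with sup‖X(λ)‖ = 1. Then for all ξ, η ∈ H and any finite partition −∞ < λ₀ < λ₁ < ⋯ < λₙ ≤ λ, the sum ∑ₖ |⟨(X(λₖ) − X(λₖ₋₁))ξ, η⟩| is bounded by ⟨F(λ)ξ, ξ⟩^{1/2} ⟨F*(λ)η, η⟩^{1/2} ≤ ‖ξ‖·‖η‖, where F(λ) = X(λ)*X(λ) and F*(λ) = X(λ)X(λ)*. In particular the function λ ↦ ⟨X(λ)ξ, η⟩ is of bounded variation. -/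
open Filter Topology
open scoped InnerProductSpace

/-- An idempotent contraction on a Hilbert space is self-adjoint (it is the orthogonal
projection onto its range). -/
lemma idem_contraction_selfAdjoint {H : Type*} [NormedAddCommGroup H]
    [InnerProductSpace ℂ H] [CompleteSpace H] (P : H →L[ℂ] H)
    (hidem : ∀ x, P (P x) = P x) (hle : ∀ w : H, ‖P w‖ ≤ ‖w‖) :
    ContinuousLinearMap.adjoint P = P := by
  have horth : ∀ u v : H, P u = u → P v = 0 → ⟪u, v⟫_ℂ = 0 := by
    intro u v hu hv
    rcases eq_or_ne v 0 with rfl | hv0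
    · simp
    by_contra hc
    set c : ℂ := ⟪u, v⟫_ℂ with hcdef
    have hcpos : 0 < ‖c‖ ^ 2 := by
      have : 0 < ‖c‖ := norm_pos_iff.mpr hc
      positivity
    have hvpos : 0 < ‖v‖ ^ 2 := by
      have : 0 < ‖v‖ := norm_pos_iff.mpr hv0
      positivity
    set s : ℝ := 1 / ‖v‖ ^ 2 with hsdef
    have hs : 0 < s := by positivity
    set t : ℂ := (-(s : ℂ)) * (starRingEnd ℂ) c with htdef
    have h1 : P (u + t • v) = u := by
      rw [map_add, hu, map_smul, hv, smul_zero, add_zero]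
    have h2 : ‖u‖ ≤ ‖u + t • v‖ := by
      calc ‖u‖ = ‖P (u + t • v)‖ := by rw [h1]
        _ ≤ ‖u + t • v‖ := hle _
    have hsq : ‖u‖ ^ 2 ≤ ‖u + t • v‖ ^ 2 := by
      exact pow_le_pow_left₀ (norm_nonneg u) h2 2
    rw [@norm_add_sq ℂ] at hsq
    have hinner : ⟪u, t • v⟫_ℂ = t * c := by
      rw [inner_smul_right]
    have hre : (RCLike.re (⟪u, t • v⟫_ℂ) : ℝ) = -(s * ‖c‖ ^ 2) := by
      have ht2 : t * c = ((-(s * ‖c‖ ^ 2) : ℝ) : ℂ) := by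
        rw [htdef, mul_assoc, RCLike.conj_mul]
        simp [← RCLike.ofReal_mul]
      rw [hinner, ht2]
      exact RCLike.ofReal_re _
    have hnt : ‖t • v‖ ^ 2 = s ^ 2 * ‖c‖ ^ 2 * ‖v‖ ^ 2 := by
      rw [norm_smul]
      rw [mul_pow]
      congr 1
      rw [htdef]
      simp [norm_mul, mul_pow, abs_of_pos hs]
    rw [hre, hnt] at hsq
    have hsv : s * ‖v‖ ^ 2 = 1 := by
      rw [hsdef]; field_simp
    nlinarith [hsq, hcpos, hs]
  have hsym : ∀ x y : H, ⟪P x, y⟫_ℂ = ⟪x, P y⟫_ℂ := by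
    intro x y
    have h1 : ⟪P y, x - P x⟫_ℂ = 0 := horth _ _ (hidem y) (by rw [map_sub, hidem, sub_self])
    have h1' : ⟪x - P x, P y⟫_ℂ = 0 := by
      rw [← inner_conj_symm, h1, map_zero]
    have h2 : ⟪P x, y - P y⟫_ℂ = 0 := horth _ _ (hidem x) (by rw [map_sub, hidem, sub_self])
    have e1 : ⟪P x, y⟫_ℂ - ⟪P x, P y⟫_ℂ = 0 := by rw [← inner_sub_right]; exact h2
    have e2 : ⟪x, P y⟫_ℂ - ⟪P x, P y⟫_ℂ = 0 := by rw [← inner_sub_left]; exact h1'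
    linear_combination e1 - e2
  exact ((ContinuousLinearMap.eq_adjoint_iff P P).mpr hsym).symm

/-- For a *-resolution of the identity with `sup‖X(λ)‖ = 1`: for all `ξ, η` and any finite
partition `λ₀ < λ₁ < ⋯ < λₙ ≤ λ`, the sum `∑ₖ |⟨(X(λₖ₊₁) − X(λₖ))ξ, η⟩|` is bounded by
`⟨F(λ)ξ, ξ⟩^{1/2} ⟨F*(λ)η, η⟩^{1/2} ≤ ‖ξ‖·‖η‖`, where `F(λ) = X(λ)*X(λ)` and
`F*(λ) = X(λ)X(λ)*`; in particular `λ ↦ ⟨X(λ)ξ, η⟩` is of bounded variation. -/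
theorem star_resolution_bounded_variation
    {H : Type*} [NormedAddCommGroup H] [InnerProductSpace ℂ H] [CompleteSpace H]
    (X : ℝ → H →L[ℂ] H)
    (hnorm : (⨆ l : ℝ, ‖X l‖) = 1)
    (hmul : ∀ l m : ℝ, l < m → (X l).comp (X m) = X l ∧ (X m).comp (X l) = X l)
    (hbot : ∀ ξ : H, Tendsto (fun l => X l ξ) atBot (𝓝 0))
    (htop : ∀ ξ : H, Tendsto (fun l => X l ξ) atTop (𝓝 ξ))
    (hrc : ∀ (l : ℝ) (ξ : H), Tendsto (fun m => X m ξ) (𝓝[>] l) (𝓝 (X l ξ)))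
    (hbotS : ∀ ξ : H, Tendsto (fun l => ContinuousLinearMap.adjoint (X l) ξ) atBot (𝓝 0))
    (htopS : ∀ ξ : H, Tendsto (fun l => ContinuousLinearMap.adjoint (X l) ξ) atTop (𝓝 ξ))
    (hrcS : ∀ (l : ℝ) (ξ : H), Tendsto (fun m => ContinuousLinearMap.adjoint (X m) ξ)
      (𝓝[>] l) (𝓝 (ContinuousLinearMap.adjoint (X l) ξ)))
    (F : ℝ → H →L[ℂ] H)
    (hF : ∀ l, F l = (ContinuousLinearMap.adjoint (X l)).comp (X l))
    (Fs : ℝ → H →L[ℂ] H)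
    (hFs : ∀ l, Fs l = (X l).comp (ContinuousLinearMap.adjoint (X l))) :
    ∀ (ξ η : H) (l : ℝ) (n : ℕ) (lam : ℕ → ℝ),
      (∀ i, i < n → lam i < lam (i + 1)) → lam n ≤ l →
      (∑ k ∈ Finset.range n, ‖(⟪(X (lam (k + 1)) - X (lam k)) ξ, η⟫_ℂ)‖) ≤
          Real.sqrt (⟪F l ξ, ξ⟫_ℂ).re * Real.sqrt (⟪Fs l η, η⟫_ℂ).re ∧
        Real.sqrt (⟪F l ξ, ξ⟫_ℂ).re * Real.sqrt (⟪Fs l η, η⟫_ℂ).re ≤ ‖ξ‖ * ‖η‖ := by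
  -- the norms are bounded by 1
  have hbdd : BddAbove (Set.range fun m => ‖X m‖) := by
    by_contra h
    rw [iSup, csSup_of_not_bddAbove h, Real.sSup_empty] at hnorm
    norm_num at hnorm
  have hle1 : ∀ m, ‖X m‖ ≤ 1 := by
    intro m
    calc ‖X m‖ ≤ ⨆ l : ℝ, ‖X l‖ := le_ciSup hbdd m
      _ = 1 := hnorm
  have hcon : ∀ m (w : H), ‖X m w‖ ≤ ‖w‖ := by
    intro m w
    calc ‖X m w‖ ≤ ‖X m‖ * ‖w‖ := (X m).le_opNorm w
      _ ≤ 1 * ‖w‖ := by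
        apply mul_le_mul_of_nonneg_right (hle1 m) (norm_nonneg w)
      _ = ‖w‖ := one_mul _
  -- each X m is idempotent (via right continuity)
  have hid : ∀ m (x : H), X m (X m x) = X m x := by
    intro m x
    have h1 : Tendsto (fun t => X m (X t x)) (𝓝[>] m) (𝓝 (X m (X m x))) :=
      ((X m).continuous.tendsto _).comp (hrc m x)
    have h2 : (fun t => X m (X t x)) =ᶠ[𝓝[>] m] fun _ => X m x := by
      filter_upwards [self_mem_nhdsWithin] with t ht
      exact DFunLike.congr_fun (hmul m t ht).1 x
    exact tendsto_nhds_unique (h1.congr' h2) tendsto_const_nhds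
  -- composition identities including the equality case
  have habs : ∀ m m', m ≤ m' → ∀ x : H, X m (X m' x) = X m x := by
    intro m m' hmm x
    rcases eq_or_lt_of_le hmm with h | h
    · subst h; exact hid m x
    · exact DFunLike.congr_fun (hmul m m' h).1 x
  have habs2 : ∀ m m', m ≤ m' → ∀ x : H, X m' (X m x) = X m x := by
    intro m m' hmm x
    rcases eq_or_lt_of_le hmm with h | h
    · subst h; exact hid m x
    · exact DFunLike.congr_fun (hmul m m' h).2 x
  -- each X m is self-adjoint
  have hsa : ∀ m, ContinuousLinearMap.adjoint (X m) = X m := fun m =>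
    idem_contraction_selfAdjoint (X m) (hid m) (hcon m)
  have hsym : ∀ m (x y : H), ⟪X m x, y⟫_ℂ = ⟪x, X m y⟫_ℂ := by
    intro m x y
    conv_lhs => rw [← hsa m]
    rw [ContinuousLinearMap.adjoint_inner_left]
  -- the real part of ⟪X m x, x⟫ is ‖X m x‖²
  have hre : ∀ m (x : H), (⟪X m x, x⟫_ℂ).re = ‖X m x‖ ^ 2 := by
    intro m x
    have : ⟪X m x, x⟫_ℂ = ⟪X m x, X m x⟫_ℂ := by
      conv_lhs => rw [← hid m x]
      rw [hsym]
    rw [this]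
    exact inner_self_eq_norm_sq (𝕜 := ℂ) (X m x)
  intro ξ η l n lam hlt hln
  -- rewrite the right-hand side quantities
  have hFre : (⟪F l ξ, ξ⟫_ℂ).re = ‖X l ξ‖ ^ 2 := by
    rw [hF l]
    have : ((ContinuousLinearMap.adjoint (X l)).comp (X l)) ξ = X l (X l ξ) := by
      rw [ContinuousLinearMap.comp_apply, hsa l]
    rw [this, hid l ξ, hre]
  have hFsre : (⟪Fs l η, η⟫_ℂ).re = ‖X l η‖ ^ 2 := by
    rw [hFs l]
    have : ((X l).comp (ContinuousLinearMap.adjoint (X l))) η = X l (X l η) := by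
      rw [ContinuousLinearMap.comp_apply, hsa l]
    rw [this, hid l η, hre]
  have hsqF : Real.sqrt (⟪F l ξ, ξ⟫_ℂ).re = ‖X l ξ‖ := by
    rw [hFre, Real.sqrt_sq (norm_nonneg _)]
  have hsqFs : Real.sqrt (⟪Fs l η, η⟫_ℂ).re = ‖X l η‖ := by
    rw [hFsre, Real.sqrt_sq (norm_nonneg _)]
  constructor
  · -- main inequality
    rw [hsqF, hsqFs]
    -- abbreviation for the interval operators
    set A : ℕ → H →L[ℂ] H := fun k => X (lam (k + 1)) - X (lam k) with hA
    have hAapp : ∀ k (x : H), A k x = X (lam (k + 1)) x - X (lam k) x := by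
      intro k x; simp [hA]
    -- A k is idempotent for k < n
    have hAid : ∀ k, k < n → ∀ x : H, A k (A k x) = A k x := by
      intro k hk x
      have h1 : lam k ≤ lam (k + 1) := le_of_lt (hlt k hk)
      simp only [hAapp, map_sub]
      rw [hid (lam (k + 1)) x, habs (lam k) (lam (k + 1)) h1 x,
        habs2 (lam k) (lam (k + 1)) h1 x, hid (lam k) x]
      abel
    -- A k is self-adjoint
    have hAsym : ∀ k (x y : H), ⟪A k x, y⟫_ℂ = ⟪x, A k y⟫_ℂ := by
      intro k x y
      rw [hAapp, hAapp, inner_sub_left, inner_sub_right, hsym, hsym]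
    -- each term equals |⟪A k ξ, A k η⟫|
    have hterm : ∀ k, k < n → ‖⟪A k ξ, η⟫_ℂ‖ ≤ ‖A k ξ‖ * ‖A k η‖ := by
      intro k hk
      have : ⟪A k ξ, η⟫_ℂ = ⟪A k ξ, A k η⟫_ℂ := by
        conv_lhs => rw [← hAid k hk ξ]
        rw [hAsym]
      rw [this]
      exact norm_inner_le_norm _ _
    -- ‖A k x‖² = re ⟪A k x, x⟫
    have hAre : ∀ k, k < n → ∀ x : H, ‖A k x‖ ^ 2 = (⟪A k x, x⟫_ℂ).re := by
      intro k hk x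
      have : ⟪A k x, x⟫_ℂ = ⟪A k x, A k x⟫_ℂ := by
        conv_lhs => rw [← hAid k hk x]
        rw [hAsym]
      rw [this]
      exact (inner_self_eq_norm_sq (𝕜 := ℂ) (A k x)).symm
    -- sum of squares bound
    have hsumsq : ∀ x : H, (∑ k ∈ Finset.range n, ‖A k x‖ ^ 2) ≤ ‖X l x‖ ^ 2 := by
      intro x
      have h1 : (∑ k ∈ Finset.range n, ‖A k x‖ ^ 2)
          = (∑ k ∈ Finset.range n, (⟪A k x, x⟫_ℂ).re) := by
        apply Finset.sum_congr rfl
        intro k hk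
        exact hAre k (Finset.mem_range.mp hk) x
      have h2 : (∑ k ∈ Finset.range n, (⟪A k x, x⟫_ℂ).re)
          = ‖X (lam n) x‖ ^ 2 - ‖X (lam 0) x‖ ^ 2 := by
        have : (∑ k ∈ Finset.range n, (⟪A k x, x⟫_ℂ).re)
            = (∑ k ∈ Finset.range n,
                ((⟪X (lam (k + 1)) x, x⟫_ℂ).re - (⟪X (lam k) x, x⟫_ℂ).re)) := by
          apply Finset.sum_congr rfl
          intro k _
          rw [hAapp, inner_sub_left]
          simp
        rw [this, Finset.sum_range_sub (fun k => (⟪X (lam k) x, x⟫_ℂ).re), hre, hre]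
      have h3 : ‖X (lam n) x‖ ≤ ‖X l x‖ := by
        calc ‖X (lam n) x‖ = ‖X (lam n) (X l x)‖ := by rw [habs (lam n) l hln x]
          _ ≤ ‖X l x‖ := hcon _ _
      have h4 : ‖X (lam n) x‖ ^ 2 ≤ ‖X l x‖ ^ 2 :=
        pow_le_pow_left₀ (norm_nonneg _) h3 2
      rw [h1, h2]
      nlinarith [sq_nonneg ‖X (lam 0) x‖]
    -- Cauchy–Schwarz for sums
    calc (∑ k ∈ Finset.range n, ‖⟪(X (lam (k + 1)) - X (lam k)) ξ, η⟫_ℂ‖)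
        ≤ ∑ k ∈ Finset.range n, ‖A k ξ‖ * ‖A k η‖ := by
          apply Finset.sum_le_sum
          intro k hk
          exact hterm k (Finset.mem_range.mp hk)
      _ ≤ Real.sqrt (∑ k ∈ Finset.range n, ‖A k ξ‖ ^ 2) *
            Real.sqrt (∑ k ∈ Finset.range n, ‖A k η‖ ^ 2) := by
          rw [← Real.sqrt_mul (Finset.sum_nonneg fun k _ => sq_nonneg _)]
          exact Real.le_sqrt_of_sq_le (Finset.sum_mul_sq_le_sq_mul_sq _ _ _)
      _ ≤ ‖X l ξ‖ * ‖X l η‖ := by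
          apply mul_le_mul
          · rw [show ‖X l ξ‖ = Real.sqrt (‖X l ξ‖ ^ 2) from
              (Real.sqrt_sq (norm_nonneg _)).symm]
            exact Real.sqrt_le_sqrt (hsumsq ξ)
          · rw [show ‖X l η‖ = Real.sqrt (‖X l η‖ ^ 2) from
              (Real.sqrt_sq (norm_nonneg _)).symm]
            exact Real.sqrt_le_sqrt (hsumsq η)
          · exact Real.sqrt_nonneg _
          · exact norm_nonneg _
  · rw [hsqF, hsqFs]
    exact mul_le_mul (hcon l ξ) (hcon l η) (norm_nonneg _) (norm_nonneg _)
end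

section
/- Let {X(λ)} be a *-resolution of the identity with sup‖X(λ)‖ = 1, and let Δ₁, …, Δₙ be pairwise disjoint half-open intervals of ℝ. Then for every η ∈ H, ∑ₖ ‖X(Δₖ)η‖² ≤ ‖η‖², where X((a,b]) := X(b) − X(a). -/
open Filter Topology
open scoped InnerProductSpace

/-! Right continuity makes every `X λ` idempotent, and `‖X λ‖ ≤ 1`; a contractive idempotent on a
Hilbert space is an orthogonal projection, since `‖v‖ ≤ ‖v + z • w‖` for `v` in its range and `w`
in its kernel forces `v ⊥ w`. The `X (Δₖ)` are then orthogonal projections with pairwise zero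
products, so `P = ∑ₖ X (Δₖ)` is an orthogonal projection and
`∑ₖ ‖X (Δₖ) η‖² = re ⟪η, P η⟫ = ‖P η‖² ≤ ‖η‖²`. -/

theorem Set.le_or_le_of_disjoint_Ioc {α : Type*} [LinearOrder α] {a₁ a₂ b₁ b₂ : α}
    (ha : a₁ < a₂) (hb : b₁ < b₂) (h : Disjoint (Set.Ioc a₁ a₂) (Set.Ioc b₁ b₂)) :
    a₂ ≤ b₁ ∨ b₂ ≤ a₁ := by
  rw [Set.Ioc_disjoint_Ioc, min_le_iff, le_max_iff, le_max_iff] at h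
  rcases h with (h | h) | (h | h)
  · exact absurd h ha.not_ge
  · exact .inl h
  · exact .inr h
  · exact absurd h hb.not_ge

theorem Real.le_of_iSup_eq_one {ι : Sort*} {f : ι → ℝ} (h : ⨆ i, f i = 1) (i : ι) : f i ≤ 1 := by
  have hbdd : BddAbove (Set.range f) := by
    by_contra hb
    rw [Real.iSup_of_not_bddAbove hb] at h
    exact zero_ne_one h
  exact h ▸ le_ciSup hbdd i

theorem IsStarProjection.sum {ι R : Type*} [NonUnitalNonAssocSemiring R] [StarRing R]
    {s : Finset ι} {p : ι → R} (hp : ∀ i ∈ s, IsStarProjection (p i))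
    (horth : ∀ i ∈ s, ∀ j ∈ s, i ≠ j → p i * p j = 0) : IsStarProjection (∑ i ∈ s, p i) := by
  classical
  induction s using Finset.induction_on with
  | empty => simp
  | insert i s hi ih =>
    rw [Finset.sum_insert hi]
    refine (hp i (s.mem_insert_self i)).add
      (ih (fun j hj => hp j (Finset.mem_insert_of_mem hj))
        (fun j hj k hk => horth j (Finset.mem_insert_of_mem hj) k (Finset.mem_insert_of_mem hk)))
      ?_
    rw [Finset.mul_sum]
    refine Finset.sum_eq_zero fun j hj => ?_
    exact horth i (s.mem_insert_self i) j (Finset.mem_insert_of_mem hj)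
      (ne_of_mem_of_not_mem hj hi).symm

section InnerProductSpace

variable {𝕜 E : Type*} [RCLike 𝕜] [NormedAddCommGroup E] [InnerProductSpace 𝕜 E]

theorem inner_eq_zero_of_forall_norm_le_norm_add_smul {v w : E}
    (h : ∀ z : 𝕜, ‖v‖ ≤ ‖v + z • w‖) : ⟪v, w⟫_𝕜 = 0 := by
  have hpyth := (𝕜 ∙ w).norm_sq_eq_add_norm_sq_projection v
  have hle : ‖v‖ ≤ ‖(𝕜 ∙ w)ᗮ.orthogonalProjectionOnto v‖ := by
    convert h (-(⟪w, v⟫_𝕜 / ((‖w‖ ^ 2 : ℝ) : 𝕜))) using 1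
    rw [← Submodule.norm_coe, ← Submodule.starProjection_apply,
      Submodule.starProjection_orthogonal_val, Submodule.starProjection_singleton, neg_smul,
      sub_eq_add_neg]
  have hzero : (𝕜 ∙ w).orthogonalProjectionOnto v = 0 := by
    rw [← norm_eq_zero]
    nlinarith [norm_nonneg v, norm_nonneg ((𝕜 ∙ w).orthogonalProjectionOnto v)]
  exact inner_eq_zero_symm.mp (Submodule.mem_orthogonal_singleton_iff_inner_right.mp
    (Submodule.orthogonalProjectionOnto_eq_zero_iff.mp hzero))

variable [CompleteSpace E]

theorem ContinuousLinearMap.isStarProjection_of_isIdempotentElem_of_norm_le_one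
    {P : E →L[𝕜] E} (hP : IsIdempotentElem P) (hnorm : ‖P‖ ≤ 1) : IsStarProjection P := by
  refine ⟨hP, isSelfAdjoint_iff_isSymmetric.mpr ?_⟩
  refine (LinearMap.IsIdempotentElem.isSymmetric_iff_isOrtho_range_ker
    (isIdempotentElem_toLinearMap_iff.mpr hP)).mpr (Submodule.isOrtho_iff_inner_eq.mpr ?_)
  rintro _ ⟨v, rfl⟩ w hw
  have hPw : P w = 0 := hw
  refine inner_eq_zero_of_forall_norm_le_norm_add_smul fun z => ?_
  calc ‖P v‖ = ‖P (P v + z • w)‖ := by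
        rw [map_add, map_smul, hPw, smul_zero, add_zero]
        exact congr(‖$(hP.eq) v‖).symm
    _ ≤ ‖P v + z • w‖ := (P.le_of_opNorm_le hnorm _).trans_eq (one_mul _)

theorem IsStarProjection.norm_apply_sq {P : E →L[𝕜] E} (hP : IsStarProjection P) (x : E) :
    ‖P x‖ ^ 2 = RCLike.re ⟪x, P x⟫_𝕜 := by
  rw [← inner_self_eq_norm_sq (𝕜 := 𝕜), ← ContinuousLinearMap.adjoint_inner_right,
    ← ContinuousLinearMap.star_eq_adjoint, hP.isSelfAdjoint.star_eq]
  exact congr(RCLike.re ⟪x, $(hP.isIdempotentElem.eq) x⟫_𝕜)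

theorem IsStarProjection.sum_norm_apply_sq_le {ι : Type*} [Fintype ι] {Q : ι → E →L[𝕜] E}
    (hQ : ∀ i, IsStarProjection (Q i)) (horth : ∀ i j, i ≠ j → Q i * Q j = 0) (x : E) :
    ∑ i, ‖Q i x‖ ^ 2 ≤ ‖x‖ ^ 2 := by
  have hP : IsStarProjection (∑ i, Q i) :=
    .sum (fun i _ => hQ i) (fun i _ j _ hij => horth i j hij)
  calc ∑ i, ‖Q i x‖ ^ 2 = RCLike.re ⟪x, (∑ i, Q i) x⟫_𝕜 := by
        simp only [(hQ _).norm_apply_sq, sum_apply, inner_sum, map_sum]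
    _ = ‖(∑ i, Q i) x‖ ^ 2 := (hP.norm_apply_sq x).symm
    _ ≤ ‖x‖ ^ 2 := by
      gcongr
      exact ((∑ i, Q i).le_of_opNorm_le (hP.norm_le _) x).trans_eq (one_mul _)

end InnerProductSpace

theorem mul_eq_left_of_le_of_tendsto_nhdsGT {R M : Type*} [Semiring R] [TopologicalSpace M]
    [T2Space M] [AddCommMonoid M] [Module R M] {X : ℝ → M →L[R] M}
    (hmul : ∀ l m, l < m → X l * X m = X l ∧ X m * X l = X l)
    (hrc : ∀ l ξ, Tendsto (fun m => X m ξ) (𝓝[>] l) (𝓝 (X l ξ))) {l m : ℝ} (hlm : l ≤ m) :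
    X l * X m = X l ∧ X m * X l = X l := by
  rcases hlm.lt_or_eq with hlt | rfl
  · exact hmul l m hlt
  suffices X l * X l = X l from ⟨this, this⟩
  ext ξ
  refine tendsto_nhds_unique (((X l).continuous.tendsto _).comp (hrc l ξ)) ?_
  refine tendsto_const_nhds.congr' ?_
  filter_upwards [self_mem_nhdsWithin] with m hm
  exact congr($((hmul l m hm).1) ξ).symm

theorem sub_mul_sub_eq_zero_of_le {R : Type*} [NonUnitalRing R] {X : ℝ → R}
    (hX : ∀ l m, l ≤ m → X l * X m = X l ∧ X m * X l = X l) {a b a' b' : ℝ}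
    (hab : a ≤ b) (hba' : b ≤ a') (hab' : a' ≤ b') :
    (X b - X a) * (X b' - X a') = 0 ∧ (X b' - X a') * (X b - X a) = 0 := by
  obtain ⟨h₁, h₂⟩ := hX b b' (hba'.trans hab')
  obtain ⟨h₃, h₄⟩ := hX b a' hba'
  obtain ⟨h₅, h₆⟩ := hX a b' ((hab.trans hba').trans hab')
  obtain ⟨h₇, h₈⟩ := hX a a' (hab.trans hba')
  simp only [sub_mul, mul_sub, h₁, h₂, h₃, h₄, h₅, h₆, h₇, h₈]
  constructor <;> abel

theorem star_resolution_disjoint_intervals_sum_general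
    {H : Type*} [NormedAddCommGroup H] [InnerProductSpace ℂ H] [CompleteSpace H]
    (X : ℝ → H →L[ℂ] H)
    (hnorm : (⨆ l : ℝ, ‖X l‖) = 1)
    (hmul : ∀ l m : ℝ, l < m → (X l).comp (X m) = X l ∧ (X m).comp (X l) = X l)
    (hrc : ∀ (l : ℝ) (ξ : H), Tendsto (fun m => X m ξ) (𝓝[>] l) (𝓝 (X l ξ)))
    (n : ℕ) (a b : Fin n → ℝ) (hab : ∀ k, a k < b k)
    (hdisj : ∀ k m : Fin n, k ≠ m → Disjoint (Set.Ioc (a k) (b k)) (Set.Ioc (a m) (b m))) :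
    ∀ η : H, (∑ k : Fin n, ‖(X (b k) - X (a k)) η‖ ^ 2) ≤ ‖η‖ ^ 2 := by
  have hX l m (hlm : l ≤ m) := mul_eq_left_of_le_of_tendsto_nhdsGT hmul hrc hlm
  have hproj l : IsStarProjection (X l) :=
    ContinuousLinearMap.isStarProjection_of_isIdempotentElem_of_norm_le_one (hX l l le_rfl).1
      (Real.le_of_iSup_eq_one hnorm l)
  refine IsStarProjection.sum_norm_apply_sq_le
    (fun k => (hproj _).sub_of_mul_eq_left (hproj _) (hX _ _ (hab k).le).1) fun k m hkm => ?_
  rcases Set.le_or_le_of_disjoint_Ioc (hab k) (hab m) (hdisj k m hkm) with h | h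
  · exact (sub_mul_sub_eq_zero_of_le hX (hab k).le h (hab m).le).1
  · exact (sub_mul_sub_eq_zero_of_le hX (hab m).le h (hab k).le).2

/-- For a *-resolution of the identity with `sup‖X(λ)‖ = 1` and pairwise disjoint half-open
intervals `Δₖ = (aₖ, bₖ]`, one has `∑ₖ ‖X(Δₖ)η‖² ≤ ‖η‖²` where `X((a,b]) = X(b) − X(a)`. -/
theorem star_resolution_disjoint_intervals_sum
    {H : Type*} [NormedAddCommGroup H] [InnerProductSpace ℂ H] [CompleteSpace H]
    (X : ℝ → H →L[ℂ] H)
    (hnorm : (⨆ l : ℝ, ‖X l‖) = 1)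
    (hmul : ∀ l m : ℝ, l < m → (X l).comp (X m) = X l ∧ (X m).comp (X l) = X l)
    (hbot : ∀ ξ : H, Tendsto (fun l => X l ξ) atBot (𝓝 0))
    (htop : ∀ ξ : H, Tendsto (fun l => X l ξ) atTop (𝓝 ξ))
    (hrc : ∀ (l : ℝ) (ξ : H), Tendsto (fun m => X m ξ) (𝓝[>] l) (𝓝 (X l ξ)))
    (hbotS : ∀ ξ : H, Tendsto (fun l => ContinuousLinearMap.adjoint (X l) ξ) atBot (𝓝 0))
    (htopS : ∀ ξ : H, Tendsto (fun l => ContinuousLinearMap.adjoint (X l) ξ) atTop (𝓝 ξ))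
    (hrcS : ∀ (l : ℝ) (ξ : H), Tendsto (fun m => ContinuousLinearMap.adjoint (X m) ξ)
      (𝓝[>] l) (𝓝 (ContinuousLinearMap.adjoint (X l) ξ)))
    (F : ℝ → H →L[ℂ] H)
    (hF : ∀ l, F l = (ContinuousLinearMap.adjoint (X l)).comp (X l))
    (n : ℕ) (a b : Fin n → ℝ) (hab : ∀ k, a k < b k)
    (hdisj : ∀ k m : Fin n, k ≠ m → Disjoint (Set.Ioc (a k) (b k)) (Set.Ioc (a m) (b m))) :
    ∀ η : H, (∑ k : Fin n, ‖(X (b k) - X (a k)) η‖ ^ 2) ≤ ‖η‖ ^ 2 :=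
  star_resolution_disjoint_intervals_sum_general X hnorm hmul hrc n a b hab hdisj
end
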